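/- Let M be a Maya diagram with block coordinates (β₀,...,β_{2g}). Then applying the flips φ_{β₀}, φ_{β₁}, ..., φ_{β_{2g}} (in any order) to M yields M + 1. In particular every Maya diagram of genus g is (2g+1, 1)-cyclic. -/

import Mathlib

open Classical in
/-- The flip at site `m`: toggle membership of `m` in `M`. -/
noncomputable def mayaFlip (m : ℤ) (M : Set ℤ) : Set ℤ :=
  if m ∈ M then M \ {m} else M ∪ {m}

/-- Composition of flips along a list of sites. -/
noncomputable def flipList (l : List ℤ) (M : Set ℤ) : Set ℤ :=
  l.foldr mayaFlip M

/-- `Ξ(β) = (-∞,β₀) ∪ [β₁,β₂) ∪ ... ∪ [β_{2g-1},β_{2g})`. -/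
def XiBlocks (g : ℕ) (β : Fin (2 * g + 1) → ℤ) : Set ℤ :=
  Set.Iio (β ⟨0, by omega⟩) ∪
    ⋃ i : Fin g, Set.Ico (β ⟨2 * (i : ℕ) + 1, by have := i.isLt; omega⟩)
      (β ⟨2 * (i : ℕ) + 2, by have := i.isLt; omega⟩)

/-- `M + k = {m + k : m ∈ M}`. -/
def shiftSet (M : Set ℤ) (k : ℤ) : Set ℤ := (· + k) '' M

/-- `M` is `(p,k)`-cyclic: some composition of `p` flips maps `M` to `M + k`. -/
def MayaCyclic (M : Set ℤ) (p : ℕ) (k : ℤ) : Prop :=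
  ∃ μ : List ℤ, μ.length = p ∧ flipList μ M = shiftSet M k

/-! A point `x` lies in `Ξ(β)` exactly when an even number of the `βᵢ` are `≤ x`. Passing from
`x - 1` to `x` this count grows by one precisely when `x` is a block coordinate, so
`M + 1 = M ∆ {β₀, …, β_{2g}}`; and flipping at distinct sites is the symmetric difference with
the set of sites. -/

open Finset

lemma mayaFlip_eq_symmDiff (m : ℤ) (M : Set ℤ) : mayaFlip m M = symmDiff M {m} := by
  ext x
  by_cases hx : x = m
  · subst hx; unfold mayaFlip; split_ifs with h <;> simp [Set.mem_symmDiff, h]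
  · unfold mayaFlip; split_ifs <;> simp [Set.mem_symmDiff, hx]

lemma flipList_eq_symmDiff_of_nodup {l : List ℤ} (hl : l.Nodup) (M : Set ℤ) :
    flipList l M = symmDiff M {x | x ∈ l} := by
  induction l with
  | nil => ext; simp [flipList, Set.mem_symmDiff]
  | cons a l ih =>
    obtain ⟨hal, hl⟩ := List.nodup_cons.mp hl
    change mayaFlip a (flipList l M) = _
    rw [mayaFlip_eq_symmDiff, ih hl]
    ext x
    by_cases hx : x = a
    · subst hx; simp [Set.mem_symmDiff, hal]
    · simp [Set.mem_symmDiff, hx]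

lemma mem_shiftSet {M : Set ℤ} {k x : ℤ} : x ∈ shiftSet M k ↔ x - k ∈ M := by
  simp [shiftSet, sub_eq_add_neg]

lemma Monotone.le_iff_lt_card_filter_le {α : Type*} [LinearOrder α] {n : ℕ}
    {β : Fin n → α} (hβ : Monotone β) (x : α) (i : Fin n) :
    β i ≤ x ↔ (i : ℕ) < #{j | β j ≤ x} := by
  constructor
  · intro hi
    calc (i : ℕ) < #(Iic i) := by simp
      _ ≤ #{j | β j ≤ x} := card_le_card fun j hj => by
          simp only [mem_Iic, mem_filter, mem_univ, true_and] at hj ⊢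
          exact (hβ hj).trans hi
  · intro hi
    by_contra hxi
    have : #{j | β j ≤ x} ≤ #(Iio i) := card_le_card fun j hj => by
      simp only [mem_Iio, mem_filter, mem_univ, true_and] at hj ⊢
      by_contra hij
      exact hxi ((hβ (not_lt.mp hij)).trans hj)
    rw [Fin.card_Iio] at this
    omega

lemma mem_XiBlocks_iff_even_card {g : ℕ} {β : Fin (2 * g + 1) → ℤ} (hβ : Monotone β) (x : ℤ) :
    x ∈ XiBlocks g β ↔ Even #{j | β j ≤ x} := by
  have hc : #{j | β j ≤ x} ≤ 2 * g + 1 := (card_filter_le _ _).trans (by simp)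
  have hle : ∀ i, β i ≤ x ↔ (i : ℕ) < #{j | β j ≤ x} := hβ.le_iff_lt_card_filter_le x
  have hlt : ∀ i, x < β i ↔ #{j | β j ≤ x} ≤ i := fun i => by rw [← not_le, hle, not_lt]
  generalize #{j | β j ≤ x} = c at hc hle hlt ⊢
  simp only [XiBlocks, Set.mem_union, Set.mem_Iio, Set.mem_iUnion, Set.mem_Ico, hlt, hle]
  constructor
  · rintro (h | ⟨i, h₁, h₂⟩)
    · exact ⟨0, by omega⟩
    · exact ⟨i + 1, by omega⟩
  · rintro ⟨k, hk⟩
    rcases k with _ | k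
    · left; omega
    · exact Or.inr ⟨⟨k, by omega⟩, by rw [Fin.val_mk]; omega, by rw [Fin.val_mk]; omega⟩

lemma card_filter_le_eq_card_filter_le_sub_one_add {n : ℕ} (β : Fin n → ℤ) (x : ℤ) :
    #{j | β j ≤ x} = #{j | β j ≤ x - 1} + #{j | β j = x} := by
  rw [← card_union_of_disjoint (disjoint_filter.mpr fun _ _ h h' => by omega), ← filter_or]
  congr 1
  ext j
  simp only [mem_filter, mem_univ, true_and]
  omega

lemma shiftSet_XiBlocks_one {g : ℕ} {β : Fin (2 * g + 1) → ℤ} (hβ : StrictMono β) :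
    shiftSet (XiBlocks g β) 1 = symmDiff (XiBlocks g β) (Set.range β) := by
  ext x
  rw [mem_shiftSet, Set.mem_symmDiff, mem_XiBlocks_iff_even_card hβ.monotone,
    mem_XiBlocks_iff_even_card hβ.monotone, card_filter_le_eq_card_filter_le_sub_one_add β x]
  by_cases hx : x ∈ Set.range β
  · obtain ⟨i, rfl⟩ := hx
    have : ({j | β j = β i} : Finset _) = {i} := by ext j; simp [hβ.injective.eq_iff]
    simp [this, Nat.even_add_one]
  · have : ({j | β j = x} : Finset _) = ∅ := by
      ext j; simpa using fun h => hx ⟨j, h⟩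
    simp [this, hx]

/-- Applying the flips at the block coordinates `β₀,...,β_{2g}` (in any order) to a
Maya diagram `M` of genus `g` yields `M + 1`; in particular `M` is `(2g+1,1)`-cyclic. -/
theorem flips_at_block_coordinates (M : Set ℤ) (g : ℕ)
    (β : Fin (2 * g + 1) → ℤ) (hβ : StrictMono β) (hM : M = XiBlocks g β) :
    (∀ l : List ℤ, l.Nodup → (↑l.toFinset : Set ℤ) = Set.range β →
        flipList l M = shiftSet M 1)
    ∧ MayaCyclic M (2 * g + 1) 1 := by
  subst hM
  have flips : ∀ l : List ℤ, l.Nodup → (↑l.toFinset : Set ℤ) = Set.range β →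
      flipList l (XiBlocks g β) = shiftSet (XiBlocks g β) 1 := by
    intro l hl hlβ
    rw [flipList_eq_symmDiff_of_nodup hl, shiftSet_XiBlocks_one hβ, ← hlβ, List.coe_toFinset]
  refine ⟨flips, List.ofFn β, List.length_ofFn, flips _ (List.nodup_ofFn.mpr hβ.injective) ?_⟩
  rw [List.coe_toFinset]
  exact Set.ext fun _ => List.mem_ofFn
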